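/- Let f(z) ∈ ℤ[[z]] be a formal power series and r ≥ 1 an integer. Then, as formal power series, (−1)^r · W_{−f}^{(r)}(z) = W_f^{(r)}(z) + W_f^{(r/2)}(z²) if r ≡ 2 (mod 4), and (−1)^r · W_{−f}^{(r)}(z) = W_f^{(r)}(z) otherwise; here W_f^{(r/2)}(z²) denotes the substitution of z² into the Witt transform of f of order r/2. -/

import Mathlib

/-- Substitution of `z^d` into a formal power series: `expandPS d f = f(z^d)`. -/
noncomputable def expandPS (d : ℕ) (f : PowerSeries ℚ) : PowerSeries ℚ :=
  PowerSeries.mk fun j => if d ∣ j then PowerSeries.coeff (j / d) f else 0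

/-- The Witt transform `W_f^{(r)}(z) = (1/r) ∑_{d ∣ r} μ(d) f(z^d)^{r/d}`;
its `j`-th coefficient is `m_f(j, r)`. -/
noncomputable def witt (f : PowerSeries ℚ) (r : ℕ) : PowerSeries ℚ :=
  (1 / (r : ℚ)) • ∑ d ∈ r.divisors,
    ((ArithmeticFunction.moebius d : ℤ) : ℚ) • (expandPS d f) ^ (r / d)

/-! Because `expandPS d (-f) = -expandPS d f`, the term of index `d` in `(-1)^r W_{-f}^{(r)}`
picks up the sign `(-1)^(r + r/d) = (-1)^((d + 1) r/d)`. For squarefree `d` (the others are killed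
by `μ`) this sign is `-1` exactly when `d` is even and `r/d` is odd, i.e. when `r ≡ 2 (mod 4)` and
`d = 2e` with `e ∣ r/2`. Flipping these terms adds `-2 ∑_{e ∣ r/2} μ(2e) f(z^{2e})^{r/2e}`, and
`μ(2e) = -μ(e)` for odd `e` turns this into `r · W_f^{(r/2)}(z^2)`. -/

open Finset PowerSeries ArithmeticFunction
open scoped ArithmeticFunction.Moebius

theorem expandPS_eq_expand {d : ℕ} (hd : d ≠ 0) (f : PowerSeries ℚ) :
    expandPS d f = expand d hd f := by
  ext j
  rw [coeff_expand, expandPS, coeff_mk]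

theorem expandPS_neg {d : ℕ} (hd : d ≠ 0) (f : PowerSeries ℚ) :
    expandPS d (-f) = -expandPS d f := by
  simp only [expandPS_eq_expand hd, map_neg]

theorem expandPS_two_mul {e : ℕ} (he : e ≠ 0) (f : PowerSeries ℚ) :
    expandPS (2 * e) f = expand 2 two_ne_zero (expandPS e f) := by
  rw [expandPS_eq_expand (mul_ne_zero two_ne_zero he), expandPS_eq_expand he, expand_mul]

theorem Nat.odd_succ_mul_iff_of_squarefree {d k : ℕ} (hd : Squarefree d) :
    Odd ((d + 1) * k) ↔ d * k % 4 = 2 ∧ 2 ∣ d := by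
  have hd4 : d % 4 ≠ 0 := fun h => by
    have := hd 2 (Nat.dvd_of_mod_eq_zero h)
    norm_num at this
  rw [Nat.odd_mul, Nat.odd_add_one, Nat.not_odd_iff_even, Nat.odd_iff, Nat.even_iff,
    Nat.mul_mod, Nat.dvd_iff_mod_eq_zero]
  have hk := Nat.mod_lt k (show 4 > 0 by norm_num)
  have hd' := Nat.mod_lt d (show 4 > 0 by norm_num)
  rw [← Nat.mod_mod_of_dvd d (show 2 ∣ 4 by norm_num),
    ← Nat.mod_mod_of_dvd k (show 2 ∣ 4 by norm_num)]
  interval_cases d % 4 <;> interval_cases k % 4 <;> simp_all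

theorem neg_one_pow_add_div_of_squarefree {d r : ℕ} (hdr : d ∣ r) (hd : Squarefree d) :
    (-1 : ℚ) ^ (r + r / d) = if r % 4 = 2 ∧ 2 ∣ d then -1 else 1 := by
  obtain ⟨k, rfl⟩ := hdr
  rw [Nat.mul_div_cancel_left k (Nat.pos_of_ne_zero hd.ne_zero),
    show d * k + k = (d + 1) * k by ring]
  simp only [← Nat.odd_succ_mul_iff_of_squarefree hd]
  split_ifs with h
  · exact h.neg_one_pow
  · exact (Nat.not_odd_iff_even.mp h).neg_one_pow

theorem neg_one_pow_add_div_smul_moebius_smul {M : Type*} [AddCommGroup M] [Module ℚ M]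
    {d r : ℕ} (hdr : d ∣ r) (x : M) :
    (-1 : ℚ) ^ (r + r / d) • ((μ d : ℤ) : ℚ) • x =
      ((μ d : ℤ) : ℚ) • x + if r % 4 = 2 ∧ 2 ∣ d then (-2 * ((μ d : ℤ) : ℚ)) • x else 0 := by
  by_cases hd : Squarefree d
  · rw [neg_one_pow_add_div_of_squarefree hdr hd]
    split_ifs <;> module
  · simp [moebius_eq_zero_of_not_squarefree hd]

theorem moebius_two_mul_of_odd {e : ℕ} (he : Odd e) : μ (2 * e) = -μ e := by
  rw [isMultiplicative_moebius.map_mul_of_coprime (Nat.coprime_two_left.mpr he),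
    moebius_apply_prime Nat.prime_two, neg_one_mul]

theorem Nat.sum_divisors_filter_dvd_mul {M : Type*} [AddCommMonoid M] {n : ℕ} (hn : n ≠ 0)
    (m : ℕ) (g : ℕ → M) :
    ∑ d ∈ (n * m).divisors with n ∣ d, g d = ∑ e ∈ m.divisors, g (n * e) := by
  rcases eq_or_ne m 0 with rfl | hm
  · simp
  refine sum_nbij' (· / n) (n * ·) ?_ ?_ ?_ ?_ ?_ <;> intro d hd
  · simp only [mem_filter, Nat.mem_divisors] at hd
    obtain ⟨⟨hdvd, -⟩, k, rfl⟩ := hd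
    rw [Nat.mul_div_cancel_left k (Nat.pos_of_ne_zero hn), Nat.mem_divisors]
    exact ⟨(Nat.mul_dvd_mul_iff_left (Nat.pos_of_ne_zero hn)).mp hdvd, hm⟩
  · rw [Nat.mem_divisors] at hd
    exact mem_filter.mpr
      ⟨Nat.mem_divisors.mpr ⟨Nat.mul_dvd_mul_left n hd.1, mul_ne_zero hn hm⟩, dvd_mul_right n d⟩
  · simp only [mem_filter] at hd
    exact Nat.mul_div_cancel' hd.2
  · exact Nat.mul_div_cancel_left d (Nat.pos_of_ne_zero hn)
  · simp only [mem_filter] at hd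
    rw [Nat.mul_div_cancel' hd.2]

theorem neg_one_pow_smul_witt_neg_eq_sum (f : PowerSeries ℚ) (r : ℕ) :
    (-1 : ℚ) ^ r • witt (-f) r = (1 / (r : ℚ)) • ∑ d ∈ r.divisors,
      (-1 : ℚ) ^ (r + r / d) • ((μ d : ℤ) : ℚ) • expandPS d f ^ (r / d) := by
  rw [witt, smul_comm, smul_sum]
  refine congrArg _ (sum_congr rfl fun d hd => ?_)
  rw [expandPS_neg (Nat.pos_of_mem_divisors hd).ne', ← neg_one_smul ℚ (expandPS d f), smul_pow,
    smul_smul, smul_smul, smul_smul, pow_add]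
  ring_nf

theorem expandPS_two_witt_of_odd (f : PowerSeries ℚ) {m : ℕ} (hm : Odd m) :
    expandPS 2 (witt f m) = (1 / ((2 * m : ℕ) : ℚ)) • ∑ d ∈ (2 * m).divisors with 2 ∣ d,
      (-2 * ((μ d : ℤ) : ℚ)) • expandPS d f ^ (2 * m / d) := by
  rw [Nat.sum_divisors_filter_dvd_mul two_ne_zero, expandPS_eq_expand two_ne_zero, witt, map_smul,
    map_sum, smul_sum, smul_sum]
  refine sum_congr rfl fun e he => ?_
  have he0 : e ≠ 0 := (Nat.pos_of_mem_divisors he).ne'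
  have he_odd : Odd e := hm.of_dvd_nat (Nat.dvd_of_mem_divisors he)
  rw [map_smul, map_pow, ← expandPS_two_mul he0, moebius_two_mul_of_odd he_odd,
    Nat.mul_div_mul_left _ _ two_pos, smul_smul, smul_smul]
  congr 1
  push_cast
  field_simp

theorem neg_one_pow_smul_witt_neg_general (f : PowerSeries ℚ) (r : ℕ) :
    (-1 : ℚ) ^ r • witt (-f) r =
      if r % 4 = 2 then witt f r + expandPS 2 (witt f (r / 2)) else witt f r := by
  rw [neg_one_pow_smul_witt_neg_eq_sum, sum_congr rfl fun d hd =>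
    neg_one_pow_add_div_smul_moebius_smul (Nat.dvd_of_mem_divisors hd) _, sum_add_distrib,
    smul_add, ← witt]
  split_ifs with h
  · obtain ⟨m, rfl, hm⟩ : ∃ m, r = 2 * m ∧ Odd m := ⟨r / 2, by omega, Nat.odd_iff.mpr (by omega)⟩
    simp only [h, true_and, ← sum_filter, Nat.mul_div_cancel_left m two_pos]
    rw [expandPS_two_witt_of_odd f hm]
  · simp [h]

/-- For `f ∈ ℤ[[z]]` and `r ≥ 1`:
`(-1)^r W_{-f}^{(r)}(z) = W_f^{(r)}(z) + W_f^{(r/2)}(z^2)` if `r ≡ 2 (mod 4)`,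
and `(-1)^r W_{-f}^{(r)}(z) = W_f^{(r)}(z)` otherwise. -/
theorem neg_one_pow_smul_witt_neg (f : PowerSeries ℚ)
    (hf : ∀ j, ∃ n : ℤ, PowerSeries.coeff j f = n) (r : ℕ) (hr : 1 ≤ r) :
    (-1 : ℚ) ^ r • witt (-f) r =
      if r % 4 = 2 then witt f r + expandPS 2 (witt f (r / 2)) else witt f r :=
  neg_one_pow_smul_witt_neg_general f r
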